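/- For every real number c ≥ 1, the quantity z₂(c) = 128·c⁴·(c−1)²·(c²−2c+2)²·(c−2)⁴ / (c⁴−8c²+16c−8)⁴ satisfies 0 ≤ z₂(c) < 0.6 and log(1 − z₂(c)) ≥ −128/c². -/

import Mathlib

open Real

/-- The quantity `z₂(c)` arising from the duplication map on `E'_a`:
if `x(P') = c·√a`, then `z(2P') = 1 − z₂(c)`. -/
noncomputable def ztwo (c : ℝ) : ℝ :=
  128 * c ^ 4 * (c - 1) ^ 2 * (c ^ 2 - 2 * c + 2) ^ 2 * (c - 2) ^ 4 /
    (c ^ 4 - 8 * c ^ 2 + 16 * c - 8) ^ 4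

/-!
Substituting `c = 1 + t` with `t ≥ 0`, the bound `z₂ < 0.6` and the bound `(c² + 128) z₂ ≤ 128`
become polynomial inequalities in `t`. In both, every negative coefficient of the expanded
difference is dominated by its neighbours through the AM-GM bound `m tᵏ⁺¹ ≤ a tᵏ + b tᵏ⁺²` for
`m² ≤ 4ab`, and the remaining coefficients are nonnegative. The logarithmic bound then follows from
`log x ≥ 1 - 1/x` at `x = 1 - z₂`, since `z₂ / (1 - z₂) ≤ 128 / c²`.
-/

theorem mul_pow_le_add_mul_pow {t a b c : ℝ} (ht : 0 ≤ t) (hb : 0 < b)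
    (habc : c ^ 2 ≤ 4 * a * b) (k j : ℕ) :
    c * t ^ (k + j) ≤ a * t ^ k + b * t ^ (k + 2 * j) := by
  have hquad : c * t ^ j ≤ a + b * (t ^ j) ^ 2 := by
    nlinarith [sq_nonneg (2 * b * t ^ j - c)]
  calc c * t ^ (k + j) = t ^ k * (c * t ^ j) := by ring
    _ ≤ t ^ k * (a + b * (t ^ j) ^ 2) := by gcongr
    _ = a * t ^ k + b * t ^ (k + 2 * j) := by ring

theorem neg_div_le_log_one_sub {z k M : ℝ} (hk : 0 < k) (hz : z < 1)
    (h : (k + M) * z ≤ M) : -(M / k) ≤ log (1 - z) := by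
  have hpos : 0 < 1 - z := by linarith
  calc -(M / k) ≤ -(z / (1 - z)) := by
        rw [neg_le_neg_iff, div_le_div_iff₀ hpos hk]
        linarith
    _ = 1 - (1 - z)⁻¹ := by field_simp; ring
    _ ≤ log (1 - z) := one_sub_inv_le_log_of_pos hpos

def ztwoNumer (t : ℝ) : ℝ := (1 + t) ^ 4 * t ^ 2 * (t ^ 2 + 1) ^ 2 * (t - 1) ^ 4

def ztwoDenom (t : ℝ) : ℝ := t ^ 4 + 4 * t ^ 3 - 2 * t ^ 2 + 4 * t + 1

theorem ztwo_one_add (t : ℝ) : ztwo (1 + t) = 128 * ztwoNumer t / ztwoDenom t ^ 4 := by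
  rw [ztwo, ztwoNumer, ztwoDenom]
  congr 1 <;> ring

theorem ztwoNumer_nonneg (t : ℝ) : 0 ≤ ztwoNumer t := by
  rw [ztwoNumer]
  positivity

theorem one_le_ztwoDenom {t : ℝ} (ht : 0 ≤ t) : 1 ≤ ztwoDenom t := by
  rw [ztwoDenom]
  linear_combination mul_pow_le_add_mul_pow ht (a := 4) (b := 4) (c := 2) (by norm_num) (by norm_num) 1 1
    + pow_nonneg ht 4

theorem ztwoNumer_lt_ztwoDenom_pow {t : ℝ} (ht : 0 ≤ t) :
    5 * (128 * ztwoNumer t) < 3 * ztwoDenom t ^ 4 := by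
  rw [ztwoNumer, ztwoDenom]
  linear_combination
    mul_pow_le_add_mul_pow ht (a := 48) (b := 528) (c := 318) (by norm_num) (by norm_num) 1 1
    + mul_pow_le_add_mul_pow ht (a := 1) (b := 841) (c := 58) (by norm_num) (by norm_num) 0 2
    + mul_pow_le_add_mul_pow ht (a := 3256) (b := 243) (c := 1776) (by norm_num) (by norm_num) 6 1
    + mul_pow_le_add_mul_pow ht (a := 243) (b := 3256) (c := 1776) (by norm_num) (by norm_num) 8 1
    + mul_pow_le_add_mul_pow ht (a := 841) (b := 1) (c := 58) (by norm_num) (by norm_num) 12 2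
    + mul_pow_le_add_mul_pow ht (a := 528) (b := 48) (c := 318) (by norm_num) (by norm_num) 13 1
    + 715 * pow_nonneg ht 4 + 1200 * pow_nonneg ht 5 + 2924 * pow_nonneg ht 8
    + 1200 * pow_nonneg ht 11 + 715 * pow_nonneg ht 12 + 2 * pow_nonneg ht 16

theorem ztwoNumer_mul_le_ztwoDenom_pow {t : ℝ} (ht : 0 ≤ t) :
    ((1 + t) ^ 2 + 128) * ztwoNumer t ≤ ztwoDenom t ^ 4 := by
  rw [ztwoNumer, ztwoDenom]
  linear_combination
    mul_pow_le_add_mul_pow ht (a := 16) (b := 27) (c := 41) (by norm_num) (by norm_num) 1 1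
    + mul_pow_le_add_mul_pow ht (a := 1003) (b := 87) (c := 590) (by norm_num) (by norm_num) 6 1
    + mul_pow_le_add_mul_pow ht (a := 91) (b := 997) (c := 600) (by norm_num) (by norm_num) 8 1
    + mul_pow_le_add_mul_pow ht (a := 28) (b := 14) (c := 39) (by norm_num) (by norm_num) 13 1
    + 147 * pow_nonneg ht 3 + 349 * pow_nonneg ht 4 + 404 * pow_nonneg ht 5
    + 1297 * pow_nonneg ht 8 + 402 * pow_nonneg ht 11 + 351 * pow_nonneg ht 12
    + 152 * pow_nonneg ht 13

/-- For every real `c ≥ 1`: `0 ≤ z₂(c) < 0.6` and `log(1 − z₂(c)) ≥ −128/c²`. -/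
theorem ztwo_bounds (c : ℝ) (hc : 1 ≤ c) :
    0 ≤ ztwo c ∧ ztwo c < 0.6 ∧ Real.log (1 - ztwo c) ≥ -(128 / c ^ 2) := by
  obtain ⟨t, ht, rfl⟩ : ∃ t, 0 ≤ t ∧ c = 1 + t := ⟨c - 1, by linarith, by ring⟩
  have hD : 0 < ztwoDenom t ^ 4 := pow_pos (zero_lt_one.trans_le (one_le_ztwoDenom ht)) 4
  have hz_nonneg : 0 ≤ ztwo (1 + t) := by
    rw [ztwo_one_add]
    have := ztwoNumer_nonneg t
    positivity
  have hz_lt : ztwo (1 + t) < 0.6 := by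
    rw [ztwo_one_add, div_lt_iff₀ hD]
    linarith [ztwoNumer_lt_ztwoDenom_pow ht]
  refine ⟨hz_nonneg, hz_lt, neg_div_le_log_one_sub (by positivity) (by linarith) ?_⟩
  rw [ztwo_one_add, mul_div_assoc', div_le_iff₀ hD]
  linarith [ztwoNumer_mul_le_ztwoDenom_pow ht]
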